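/- Let p be a prime and 𝔉 an ℕ_p-saturated formation of finite groups containing every finite p-group. Let N be an elementary abelian normal p-subgroup of a finite group G such that G/N ∈ 𝔉 and the semidirect product N ⋊ (G/C_G(N)) belongs to 𝔉, where C_G(N) is the centralizer of N in G and G/C_G(N) acts on N by the action induced by conjugation. Then G ∈ 𝔉. -/

import Mathlib

set_option maxHeartbeats 1000000
set_option linter.unusedVariables false

/-- A bundled finite group. -/
structure FinGrp : Type 1 where
  carrier : Type
  [grp : Group carrier]
  [fin : Finite carrier]

attribute [instance] FinGrp.grp FinGrp.fin

/-- A class of finite groups. -/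
abbrev GroupClass : Type 1 := ∀ (G : Type) [Group G] [Finite G], Prop

/-- The empty class of groups. -/
def EmptyClass : GroupClass := fun _ _ _ => False

/-- A formation: a class of finite groups closed under isomorphism, homomorphic images and
subdirect products. -/
structure IsFormation (F : GroupClass) : Prop where
  iso_closed : ∀ (G : Type) [Group G] [Finite G] (H : Type) [Group H] [Finite H],
    Nonempty (G ≃* H) → F G → F H
  quotient_closed : ∀ (G : Type) [Group G] [Finite G] (N : Subgroup G) [N.Normal],
    F G → F (G ⧸ N)
  subdirect_closed : ∀ (G : Type) [Group G] [Finite G] (N₁ N₂ : Subgroup G)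
    [N₁.Normal] [N₂.Normal], N₁ ⊓ N₂ = ⊥ → F (G ⧸ N₁) → F (G ⧸ N₂) → F G

/-- `H/K` is a chief factor of `G` : both are normal in `G`, `K < H`, and no normal subgroup
of `G` lies strictly between them. -/
structure IsChiefFactor (G : Type) [Group G] (H K : Subgroup G) : Prop where
  normalH : H.Normal
  normalK : K.Normal
  lt : K < H
  no_middle : ∀ N : Subgroup G, N.Normal → K ≤ N → N ≤ H → N = K ∨ N = H

/-- The centralizer `C_G(H/K) = {g ∈ G | ∀ h ∈ H, g h g⁻¹ h⁻¹ ∈ K}` of a factor `H/K`. -/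
def relCentralizer {G : Type} [Group G] (H K : Subgroup G) (hK : K.Normal) : Subgroup G where
  carrier := {g : G | ∀ h ∈ H, g * h * g⁻¹ * h⁻¹ ∈ K}
  one_mem' := by intro h hh; simpa using K.one_mem
  mul_mem' := by
    intro a b ha hb h hh
    have key : a * b * h * (a * b)⁻¹ * h⁻¹ =
        (a * (b * h * b⁻¹ * h⁻¹) * a⁻¹) * (a * h * a⁻¹ * h⁻¹) := by group
    rw [key]
    exact K.mul_mem (hK.conj_mem _ (hb h hh) a) (ha h hh)
  inv_mem' := by
    intro a ha h hh
    have h1 : (a * h * a⁻¹ * h⁻¹)⁻¹ ∈ K := K.inv_mem (ha h hh)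
    have key : a⁻¹ * h * a⁻¹⁻¹ * h⁻¹ = a⁻¹ * (a * h * a⁻¹ * h⁻¹)⁻¹ * a⁻¹⁻¹ := by group
    exact key ▸ hK.conj_mem _ h1 a⁻¹

theorem mem_relCentralizer_iff {G : Type} [Group G] {H K : Subgroup G} (hK : K.Normal)
    (g : G) : g ∈ relCentralizer H K hK ↔ ∀ h ∈ H, g * h * g⁻¹ * h⁻¹ ∈ K := Iff.rfl

theorem relCentralizer_normal {G : Type} [Group G] {H K : Subgroup G}
    (hH : H.Normal) (hK : K.Normal) : (relCentralizer H K hK).Normal := by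
  constructor
  intro c hc g h hh
  have hh' : g⁻¹ * h * g ∈ H := by simpa using hH.conj_mem h hh g⁻¹
  have hk := hc _ hh'
  have key : g * c * g⁻¹ * h * (g * c * g⁻¹)⁻¹ * h⁻¹ =
      g * (c * (g⁻¹ * h * g) * c⁻¹ * (g⁻¹ * h * g)⁻¹) * g⁻¹ := by group
  exact key ▸ hK.conj_mem _ hk g

theorem normal_sInf {G : Type} [Group G] {S : Set (Subgroup G)}
    (h : ∀ N ∈ S, N.Normal) : (sInf S).Normal := by
  constructor
  intro n hn g
  rw [Subgroup.mem_sInf] at hn ⊢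
  intro N hN
  exact (h N hN).conj_mem n (hn N hN) g

theorem normal_sSup {G : Type} [Group G] {S : Set (Subgroup G)}
    (h : ∀ N ∈ S, N.Normal) : (sSup S).Normal := by
  constructor
  intro n hn g
  rw [sSup_eq_iSup'] at hn ⊢
  refine Subgroup.iSup_induction (fun N : S => (N : Subgroup G))
    (C := fun x => g * x * g⁻¹ ∈ ⨆ N : S, (N : Subgroup G)) hn
    (fun N x hx => ?_) ?_ (fun x y hx hy => ?_)
  · exact le_iSup (fun N : S => (N : Subgroup G)) N ((h N N.2).conj_mem x hx g)
  · simpa using Subgroup.one_mem _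
  · show g * (x * y) * g⁻¹ ∈ _
    have key : g * (x * y) * g⁻¹ = g * x * g⁻¹ * (g * y * g⁻¹) := by group
    rw [key]
    exact Subgroup.mul_mem _ hx hy
/-- `O_p(G)`: the largest normal `p`-subgroup of `G` (the join of all normal `p`-subgroups). -/
def pRadical (p : ℕ) (G : Type) [Group G] : Subgroup G :=
  sSup {N : Subgroup G | N.Normal ∧ IsPGroup p N}

instance pRadical_normal (p : ℕ) (G : Type) [Group G] : (pRadical p G).Normal :=
  normal_sSup fun _ hN => hN.1

/-- `O_{p'}(G)`: the largest normal subgroup of `G` of order coprime to `p`. -/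
def pPrimeRadical (p : ℕ) (G : Type) [Group G] : Subgroup G :=
  sSup {N : Subgroup G | N.Normal ∧ Nat.Coprime (Nat.card N) p}

instance pPrimeRadical_normal (p : ℕ) (G : Type) [Group G] : (pPrimeRadical p G).Normal :=
  normal_sSup fun _ hN => hN.1

/-- `O_{p',p}(G)`: the preimage in `G` of `O_p(G / O_{p'}(G))`. -/
def pPrimePRadical (p : ℕ) (G : Type) [Group G] : Subgroup G :=
  (pRadical p (G ⧸ pPrimeRadical p G)).comap (QuotientGroup.mk' (pPrimeRadical p G))

instance pPrimePRadical_normal (p : ℕ) (G : Type) [Group G] : (pPrimePRadical p G).Normal :=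
  (pRadical_normal p _).comap _

/-- A composition series of `G` : a chain `⊥ = c 0 ≤ ⋯ ≤ c n = ⊤` of subgroups, each normal
in the next one with simple quotient. -/
def IsCompSeries {G : Type} [Group G] (n : ℕ) (c : Fin (n + 1) → Subgroup G) : Prop :=
  c 0 = ⊥ ∧ c (Fin.last n) = ⊤ ∧
  ∀ i : Fin n, c i.castSucc ≤ c i.succ ∧
    ∃ hn : ((c i.castSucc).subgroupOf (c i.succ)).Normal,
      letI := hn
      IsSimpleGroup ((c i.succ) ⧸ (c i.castSucc).subgroupOf (c i.succ))

/-- `S` is (isomorphic to) a composition factor of the finite group `G`. -/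
def IsCompFactor (S : Type) [Group S] (G : Type) [Group G] : Prop :=
  ∃ (n : ℕ) (c : Fin (n + 1) → Subgroup G), IsCompSeries n c ∧
    ∃ i : Fin n, ∃ hn : ((c i.castSucc).subgroupOf (c i.succ)).Normal,
      letI := hn
      Nonempty (((c i.succ) ⧸ (c i.castSucc).subgroupOf (c i.succ)) ≃* S)

/-- The small centralizer `c_G(H/K)` of a factor `H/K` : the subgroup generated by all normal
subgroups `N` of `G` such that no composition factor of `NK/K` is isomorphic to a composition
factor of `H/K`. -/
def smallCentralizer {G : Type} [Group G] (H K : Subgroup G) (hK : K.Normal) : Subgroup G :=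
  haveI := hK
  sSup {N : Subgroup G | N.Normal ∧ ∀ (S : Type) (_ : Group S),
    IsCompFactor S (↥(N ⊔ K) ⧸ K.subgroupOf (N ⊔ K)) → ¬ IsCompFactor S (H ⧸ K.subgroupOf H)}

theorem smallCentralizer_normal {G : Type} [Group G] {H K : Subgroup G} (hK : K.Normal) :
    (smallCentralizer H K hK).Normal :=
  normal_sSup fun _ hN => hN.1

/-- `C^S(G)`: the intersection of the centralizers of all chief factors of `G` all of whose
composition factors are isomorphic to `S`. -/
def CSRad (S : Type) [Group S] (G : Type) [Group G] : Subgroup G :=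
  sInf {C : Subgroup G | ∃ (H K : Subgroup G) (hcf : IsChiefFactor G H K),
    (haveI := hcf.normalK;
      ∀ (T : Type) (_ : Group T), IsCompFactor T (H ⧸ K.subgroupOf H) → Nonempty (T ≃* S)) ∧
    C = relCentralizer H K hcf.normalK}

instance CSRad_normal (S : Type) [Group S] (G : Type) [Group G] : (CSRad S G).Normal :=
  normal_sInf fun C hC => by
    obtain ⟨H, K, hcf, -, rfl⟩ := hC
    exact relCentralizer_normal hcf.normalH hcf.normalK

/-- `C^p(G)`: the intersection of the centralizers of all chief factors of `G` whose order is
a power of the prime `p`. -/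
def CpRad (p : ℕ) (G : Type) [Group G] : Subgroup G :=
  sInf {C : Subgroup G | ∃ (H K : Subgroup G) (hcf : IsChiefFactor G H K),
    (∃ n : ℕ, Nat.card (H ⧸ K.subgroupOf H) = p ^ n) ∧ C = relCentralizer H K hcf.normalK}

instance CpRad_normal (p : ℕ) (G : Type) [Group G] : (CpRad p G).Normal :=
  normal_sInf fun C hC => by
    obtain ⟨H, K, hcf, -, rfl⟩ := hC
    exact relCentralizer_normal hcf.normalH hcf.normalK

/-- The centralizer of a normal subgroup is normal. -/
instance centralizer_normal_of_normal {G : Type} [Group G] (N : Subgroup G) [hN : N.Normal] :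
    (Subgroup.centralizer (N : Set G)).Normal := by
  constructor
  intro c hc g
  rw [Subgroup.mem_centralizer_iff] at hc ⊢
  intro h hh
  have hh' : g⁻¹ * h * g ∈ N := by simpa using hN.conj_mem h hh g⁻¹
  have hcomm := hc _ hh'
  have e1 : h * (g * c * g⁻¹) = g * (g⁻¹ * h * g * c) * g⁻¹ := by group
  rw [e1, hcomm]
  group

/-- The intersection of two normal subgroups is normal. -/
instance inf_normal {G : Type} [Group G] (A B : Subgroup G) [hA : A.Normal] [hB : B.Normal] :
    (A ⊓ B).Normal :=
  ⟨fun n hn g => ⟨hA.conj_mem n hn.1 g, hB.conj_mem n hn.2 g⟩⟩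

instance finite_semidirectProduct {N G : Type} [Group N] [Group G] (φ : G →* MulAut N)
    [Finite N] [Finite G] : Finite (N ⋊[φ] G) :=
  Finite.of_injective (fun x => (x.left, x.right)) (by
    intro a b hab
    simp only [Prod.mk.injEq] at hab
    exact SemidirectProduct.ext hab.1 hab.2)
/-! ### Satellites -/

/-- A local satellite: a map assigning to each prime a class of finite groups which is either
empty or a formation. -/
def IsLocalSatellite (f : ℕ → GroupClass) : Prop :=
  ∀ p : ℕ, p.Prime → (f p = EmptyClass ∨ IsFormation (f p))

/-- A chief factor `H/K` of `G` is `f`-central for a local satellite `f` if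
`G / C_G(H/K) ∈ f q` for every prime `q` dividing `|H/K|`. -/
def LocFCentral (f : ℕ → GroupClass) {G : Type} [Group G] [Finite G]
    (H K : Subgroup G) (hcf : IsChiefFactor G H K) : Prop :=
  ∀ q : ℕ, q.Prime → q ∣ Nat.card (H ⧸ K.subgroupOf H) →
    haveI := relCentralizer_normal hcf.normalH hcf.normalK
    f q (G ⧸ relCentralizer H K hcf.normalK)

/-- `LF f`: the class of all finite groups all of whose chief factors are `f`-central. -/
def LF (f : ℕ → GroupClass) (G : Type) [Group G] [Finite G] : Prop :=
  ∀ (H K : Subgroup G) (hcf : IsChiefFactor G H K), LocFCentral f H K hcf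

/-- An `ω`-local satellite: values `f p` for `p ∈ ω` and a value `f'` (= `f(ω')`),
all empty or formations. -/
def IsOmegaLocalSatellite (ω : Set ℕ) (f : ℕ → GroupClass) (f' : GroupClass) : Prop :=
  (∀ p ∈ ω, f p = EmptyClass ∨ IsFormation (f p)) ∧ (f' = EmptyClass ∨ IsFormation f')

/-- A chief factor `H/K` is `f`-central for the `ω`-local satellite `(f, f')`. -/
def OmegaFCentral (ω : Set ℕ) (f : ℕ → GroupClass) (f' : GroupClass) {G : Type} [Group G]
    [Finite G] (H K : Subgroup G) (hcf : IsChiefFactor G H K) : Prop :=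
  ((∃ p ∈ ω, p ∣ Nat.card (H ⧸ K.subgroupOf H)) ∧
    ∀ p ∈ ω, p ∣ Nat.card (H ⧸ K.subgroupOf H) →
      haveI := relCentralizer_normal hcf.normalH hcf.normalK
      f p (G ⧸ relCentralizer H K hcf.normalK)) ∨
  ((∀ p ∈ ω, ¬ p ∣ Nat.card (H ⧸ K.subgroupOf H)) ∧
    haveI := smallCentralizer_normal (H := H) hcf.normalK;
    f' (G ⧸ smallCentralizer H K hcf.normalK))

/-- `LF_ω(f)`: the class of all finite groups all of whose chief factors are `f`-central. -/
def LFomega (ω : Set ℕ) (f : ℕ → GroupClass) (f' : GroupClass) (G : Type) [Group G]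
    [Finite G] : Prop :=
  ∀ (H K : Subgroup G) (hcf : IsChiefFactor G H K), OmegaFCentral ω f f' H K hcf

/-- A function assigning a class of finite groups to every finite group
(used on simple groups). -/
abbrev CompSatFun : Type 1 := ∀ (S : Type) [Group S] [Finite S], GroupClass

/-- A composition satellite: assigns to each finite simple group (invariantly under isomorphism)
a class which is either empty or a formation. -/
def IsCompSatellite (f : CompSatFun) : Prop :=
  (∀ (S : Type) [Group S] [Finite S] (T : Type) [Group T] [Finite T],
      IsSimpleGroup S → IsSimpleGroup T → Nonempty (S ≃* T) → f S = f T) ∧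
  (∀ (S : Type) [Group S] [Finite S], IsSimpleGroup S → (f S = EmptyClass ∨ IsFormation (f S)))

/-- A chief factor `H/K` of `G` is `f`-central for a composition satellite `f` if
`G / C_G(H/K) ∈ f S` where `S` is the composition type of `H/K`. -/
def CompFCentral (f : CompSatFun) {G : Type} [Group G] [Finite G]
    (H K : Subgroup G) (hcf : IsChiefFactor G H K) : Prop :=
  ∀ (S : Type) (_ : Group S) (_ : Finite S),
    (haveI := hcf.normalK; IsCompFactor S (H ⧸ K.subgroupOf H)) →
    haveI := relCentralizer_normal hcf.normalH hcf.normalK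
    f S (G ⧸ relCentralizer H K hcf.normalK)

/-- `CF f`: the class of all finite groups all of whose chief factors are `f`-central. -/
def CF (f : CompSatFun) (G : Type) [Group G] [Finite G] : Prop :=
  ∀ (H K : Subgroup G) (hcf : IsChiefFactor G H K), CompFCentral f H K hcf

/-- An (isomorphism-closed) class of finite simple groups. -/
def IsSimpleClass (L : GroupClass) : Prop :=
  (∀ (S : Type) [Group S] [Finite S], L S → IsSimpleGroup S) ∧
  (∀ (S : Type) [Group S] [Finite S] (T : Type) [Group T] [Finite T],
    Nonempty (S ≃* T) → L S → L T)

/-- An `𝔏`-composition satellite: values `f S` for simple `S ∈ 𝔏` (invariant under isomorphism)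
and a single value `f'` (= `f(𝔏')`), all empty or formations. -/
def IsLCompSatellite (L : GroupClass) (f : CompSatFun) (f' : GroupClass) : Prop :=
  (∀ (S : Type) [Group S] [Finite S] (T : Type) [Group T] [Finite T],
      L S → L T → Nonempty (S ≃* T) → f S = f T) ∧
  (∀ (S : Type) [Group S] [Finite S], L S → (f S = EmptyClass ∨ IsFormation (f S))) ∧
  (f' = EmptyClass ∨ IsFormation f')

/-- A chief factor `H/K` is `f`-central for the `𝔏`-composition satellite `(f, f')` :
either its composition type `S` lies in `𝔏` and `G/C_G(H/K) ∈ f S`, or its composition type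
lies in `𝔏'` and `G/c_G(H/K) ∈ f'`. -/
def LCompFCentral (L : GroupClass) (f : CompSatFun) (f' : GroupClass) {G : Type} [Group G]
    [Finite G] (H K : Subgroup G) (hcf : IsChiefFactor G H K) : Prop :=
  ((∃ (S : Type) (_ : Group S) (_ : Finite S),
      (haveI := hcf.normalK; IsCompFactor S (H ⧸ K.subgroupOf H)) ∧ L S ∧
      (haveI := relCentralizer_normal hcf.normalH hcf.normalK;
        f S (G ⧸ relCentralizer H K hcf.normalK)))) ∨
  ((∃ (S : Type) (_ : Group S) (_ : Finite S),
      (haveI := hcf.normalK; IsCompFactor S (H ⧸ K.subgroupOf H)) ∧ IsSimpleGroup S ∧ ¬ L S) ∧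
    haveI := smallCentralizer_normal (H := H) hcf.normalK;
    f' (G ⧸ smallCentralizer H K hcf.normalK))

/-- `CF_𝔏(f)`: the class of all finite groups all of whose chief factors are `f`-central. -/
def CFL (L : GroupClass) (f : CompSatFun) (f' : GroupClass) (G : Type) [Group G]
    [Finite G] : Prop :=
  ∀ (H K : Subgroup G) (hcf : IsChiefFactor G H K), LCompFCentral L f f' H K hcf

/-! ### Radicals and saturation -/

/-- The largest normal subgroup all of whose composition factors lie in `𝔏`. -/
def ELRadical (L : GroupClass) (G : Type) [Group G] [Finite G] : Subgroup G :=
  sSup {N : Subgroup G | N.Normal ∧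
    ∀ (S : Type) (_ : Group S) (_ : Finite S), IsCompFactor S N → L S}

instance ELRadical_normal (L : GroupClass) (G : Type) [Group G] [Finite G] :
    (ELRadical L G).Normal :=
  normal_sSup fun _ hN => hN.1

/-- `G_{ωd}`: the largest normal subgroup of `G` all of whose `G`-chief factors below it have
order divisible by some prime in `ω`. -/
def omegadRadical (ω : Set ℕ) (G : Type) [Group G] [Finite G] : Subgroup G :=
  sSup {N : Subgroup G | N.Normal ∧ ∀ (H K : Subgroup G), IsChiefFactor G H K → H ≤ N →
    ∃ p ∈ ω, p ∣ Nat.card (H ⧸ K.subgroupOf H)}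

instance omegadRadical_normal (ω : Set ℕ) (G : Type) [Group G] [Finite G] :
    (omegadRadical ω G).Normal :=
  normal_sSup fun _ hN => hN.1

/-- The soluble radical: the largest normal soluble subgroup. -/
def solRadical (G : Type) [Group G] : Subgroup G :=
  sSup {N : Subgroup G | N.Normal ∧ IsSolvable N}

instance solRadical_normal (G : Type) [Group G] : (solRadical G).Normal :=
  normal_sSup fun _ hN => hN.1

/-- A finite group is `ω`-soluble if each of its composition factors either has order divisible
by no prime in `ω`, or is cyclic of order `p` for some `p ∈ ω`. -/
def IsOmegaSoluble (ω : Set ℕ) (X : Type) [Group X] : Prop :=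
  ∀ (S : Type) (_ : Group S) (_ : Finite S), IsCompFactor S X →
    (∀ p ∈ ω, ¬ p ∣ Nat.card S) ∨ (∃ p ∈ ω, Nat.card S = p ∧ IsCyclic S)

/-- The `ω`-soluble radical: the largest normal `ω`-soluble subgroup. -/
def omegaSolRadical (ω : Set ℕ) (G : Type) [Group G] : Subgroup G :=
  sSup {N : Subgroup G | N.Normal ∧ IsOmegaSoluble ω N}

instance omegaSolRadical_normal (ω : Set ℕ) (G : Type) [Group G] :
    (omegaSolRadical ω G).Normal :=
  normal_sSup fun _ hN => hN.1

/-- `𝔉` is `ℕ_p`-saturated : whenever `N` is a normal `p`-subgroup of `G` with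
`G/Φ(N) ∈ 𝔉`, then `G ∈ 𝔉`. -/
def NpSaturated (p : ℕ) (F : GroupClass) : Prop :=
  ∀ (G : Type) [Group G] [Finite G] (N : Subgroup G) [N.Normal], IsPGroup p N →
    ∀ (M : Subgroup G) [M.Normal], M = (frattini N).map N.subtype → F (G ⧸ M) → F G

/-- A minimal normal subgroup. -/
def IsMinimalNormal {G : Type} [Group G] (N : Subgroup G) : Prop :=
  N.Normal ∧ N ≠ ⊥ ∧ ∀ M : Subgroup G, M.Normal → M < N → M = ⊥

/-- The socle: the subgroup generated by all minimal normal subgroups. -/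
def socle (G : Type) [Group G] : Subgroup G :=
  sSup {N : Subgroup G | IsMinimalNormal N}

/-- A finite group is supersoluble if it has a chain of normal subgroups with cyclic
successive quotients. -/
def IsSupersoluble (X : Type) [Group X] : Prop :=
  ∃ (m : ℕ) (c : Fin (m + 1) → Subgroup X), c 0 = ⊥ ∧ c (Fin.last m) = ⊤ ∧
    (∀ i : Fin m, c i.castSucc ≤ c i.succ) ∧ (∀ i : Fin (m + 1), (c i).Normal) ∧
    ∀ i : Fin m, ∃ hn : ((c i.castSucc).subgroupOf (c i.succ)).Normal,
      letI := hn
      IsCyclic ((c i.succ) ⧸ (c i.castSucc).subgroupOf (c i.succ))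

/-- `Q(𝒳)` for `𝒳 = {G/C^p(G) | G ∈ F}`: the class of all (finite) groups isomorphic to a
quotient of some `G/C^p(G)` with `G ∈ F`. -/
def QModCp (p : ℕ) (F : GroupClass) (X : Type) [Group X] [Finite X] : Prop :=
  ∃ Gb : FinGrp, F Gb.carrier ∧
    ∃ (N : Subgroup (Gb.carrier ⧸ CpRad p Gb.carrier)) (_ : N.Normal),
      Nonempty (((Gb.carrier ⧸ CpRad p Gb.carrier) ⧸ N) ≃* X)

/-- The abelian members of a class of (simple) groups. -/
def abelianIn (L : GroupClass) (S : Type) [Group S] [Finite S] : Prop :=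
  L S ∧ ∀ a b : S, a * b = b * a

/-!
Write `A` for the elementary abelian `p`-group `N`. It is the centre of the Heisenberg-type
`p`-group `W = (A × A) ⋊ C_p`, and there it consists of commutators, hence lies in `Φ(W)`; `G`
acts on `W` through its action on `A`. A group `Y` with a normal copy of `W` lies in `𝔉` as soon
as two quotients of `Y` in `𝔉` have kernels meeting inside `Φ(W)`, by `ℕ_p`-saturation. This
puts `W ⋊ G/C_G(N)` in `𝔉` (quotients `C_p × G/C_G(N)` and `N ⋊ G/C_G(N)`), and also the quotient
of `W ⋊ G` by the diagonal `{(a⁻¹, a)}`, where `N ≤ G` becomes identified with the centre of `W`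
(quotients `C_p × G/N` and `N ⋊ G/C_G(N)`). Now `W ⋊ G` is a subdirect product of these two
groups, and `G` is a quotient of `W ⋊ G`.
-/

namespace IsFormation

variable {F : GroupClass}

theorem of_surjective (hF : IsFormation F) {X Y : Type} [Group X] [Finite X] [Group Y]
    [Finite Y] {f : X →* Y} (hf : Function.Surjective f) (hX : F X) : F Y :=
  hF.iso_closed _ _ ⟨QuotientGroup.quotientKerEquivOfSurjective f hf⟩
    (hF.quotient_closed X f.ker hX)

theorem of_subdirect (hF : IsFormation F) {X Y Z : Type} [Group X] [Finite X] [Group Y]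
    [Finite Y] [Group Z] [Finite Z] {f : X →* Y} {g : X →* Z} (hf : Function.Surjective f)
    (hg : Function.Surjective g) (hfg : f.ker ⊓ g.ker = ⊥) (hY : F Y) (hZ : F Z) : F X :=
  hF.subdirect_closed X f.ker g.ker hfg
    (hF.iso_closed _ _ ⟨(QuotientGroup.quotientKerEquivOfSurjective f hf).symm⟩ hY)
    (hF.iso_closed _ _ ⟨(QuotientGroup.quotientKerEquivOfSurjective g hg).symm⟩ hZ)

theorem prod (hF : IsFormation F) {Y Z : Type} [Group Y] [Finite Y] [Group Z] [Finite Z]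
    (hY : F Y) (hZ : F Z) : F (Y × Z) :=
  hF.of_subdirect (f := MonoidHom.fst Y Z) (g := MonoidHom.snd Y Z) Prod.fst_surjective
    Prod.snd_surjective ((Subgroup.eq_bot_iff_forall _).mpr fun _ hx => Prod.ext hx.1 hx.2)
    hY hZ

theorem quotient_of_inf_ker_le (hF : IsFormation F) {Y Y₁ Y₂ : Type} [Group Y] [Finite Y]
    [Group Y₁] [Finite Y₁] [Group Y₂] [Finite Y₂] {f₁ : Y →* Y₁} {f₂ : Y →* Y₂}
    (hf₁ : Function.Surjective f₁) (hf₂ : Function.Surjective f₂) (hY₁ : F Y₁) (hY₂ : F Y₂)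
    (M : Subgroup Y) [M.Normal] (hM : f₁.ker ⊓ f₂.ker ≤ M) : F (Y ⧸ M) := by
  set K := f₁.ker ⊓ f₂.ker
  have hK : F (Y ⧸ K) := by
    refine hF.of_subdirect (f := QuotientGroup.lift K f₁ inf_le_left)
      (g := QuotientGroup.lift K f₂ inf_le_right)
      (QuotientGroup.lift_surjective_of_surjective _ _ hf₁ _)
      (QuotientGroup.lift_surjective_of_surjective _ _ hf₂ _) ?_ hY₁ hY₂
    refine (Subgroup.eq_bot_iff_forall _).mpr fun z hz => ?_
    obtain ⟨y, rfl⟩ := QuotientGroup.mk_surjective z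
    exact (QuotientGroup.eq_one_iff y).mpr hz
  exact hF.of_surjective (QuotientGroup.map_surjective_of_surjective (N := K) (M := M)
    (f := MonoidHom.id Y) (hf := QuotientGroup.mk_surjective) (h := hM)) hK

end IsFormation

theorem Subgroup.commutator_le_of_isCoatom {G : Type*} [Group G] {M : Subgroup G} [M.Normal]
    (hM : IsCoatom M) : _root_.commutator G ≤ M := by
  obtain ⟨x, -, hx⟩ := SetLike.exists_of_lt hM.lt_top
  have hxM : ¬ zpowers x ≤ M := fun h => hx (h (mem_zpowers x))
  exact Normal.commutator_le_of_self_sup_commutative_eq_top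
    (hM.2 _ (left_lt_sup.mpr hxM)) inferInstance

theorem commutator_le_frattini {G : Type*} [Group G] [Finite G] [Group.IsNilpotent G] :
    commutator G ≤ frattini G :=
  le_iInf₂ fun M hM =>
    have := Subgroup.NormalizerCondition.normal_of_coatom M
      Group.normalizerCondition_of_isNilpotent hM
    Subgroup.commutator_le_of_isCoatom hM

theorem MulEquiv.map_frattini {G H : Type*} [Group G] [Group H] (e : G ≃* H) :
    (frattini G).map e.toMonoidHom = frattini H :=
  (MulEquiv.mapSubgroup e).map_radical

theorem NpSaturated.of_inf_ker_le_frattini {p : ℕ} {F : GroupClass} (hF : IsFormation F)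
    (hsat : NpSaturated p F) {W Y Y₁ Y₂ : Type} [Group W] [Group Y] [Finite Y] [Group Y₁]
    [Finite Y₁] [Group Y₂] [Finite Y₂] (hW : IsPGroup p W) {j : W →* Y}
    (hj : Function.Injective j) [j.range.Normal] {f₁ : Y →* Y₁} {f₂ : Y →* Y₂}
    (hf₁ : Function.Surjective f₁) (hf₂ : Function.Surjective f₂) (hY₁ : F Y₁) (hY₂ : F Y₂)
    (hker : f₁.ker ⊓ f₂.ker ≤ (frattini W).map j) : F Y := by
  have hΦ : (frattini W).map j = (frattini j.range).map j.range.subtype := by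
    rw [← (MonoidHom.ofInjective hj).map_frattini, Subgroup.map_map]
    rfl
  rw [hΦ] at hker
  exact hsat Y j.range (hW.of_equiv (MonoidHom.ofInjective hj)) _ rfl
    (hF.quotient_of_inf_ker_le hf₁ hf₂ hY₁ hY₂ _ hker)

section Shear

variable {p : ℕ} [NeZero p] {A : Type} [CommGroup A]

theorem pow_zmod_val_add (hA : ∀ a : A, a ^ p = 1) (a : A) (s t : ZMod p) :
    a ^ (s + t).val = a ^ s.val * a ^ t.val := by
  rw [ZMod.val_add, ← pow_eq_pow_mod _ (hA a), pow_add]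

def shear (hA : ∀ a : A, a ^ p = 1) : Multiplicative (ZMod p) →* MulAut (A × A) where
  toFun t :=
    { toFun := fun x => (x.1 * x.2 ^ t.toAdd.val, x.2)
      invFun := fun x => (x.1 * (x.2 ^ t.toAdd.val)⁻¹, x.2)
      left_inv := fun x => by simp
      right_inv := fun x => by simp
      map_mul' := fun x y => by
        ext
        · simp only [Prod.fst_mul, Prod.snd_mul, mul_pow]
          ac_rfl
        · rfl }
  map_one' := by ext x <;> simp
  map_mul' s t := by
    ext x
    · simp only [toAdd_mul, MulEquiv.coe_mk, Equiv.coe_fn_mk, MulAut.mul_apply,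
        pow_zmod_val_add hA]
      ac_rfl
    · rfl

@[simp] theorem shear_apply (hA : ∀ a : A, a ^ p = 1) (t : Multiplicative (ZMod p))
    (x : A × A) : shear hA t x = (x.1 * x.2 ^ t.toAdd.val, x.2) := rfl

/-- `((a, b), t)` multiplies like the unitriangular matrix `[[1, t, a], [0, 1, b], [0, 0, 1]]`. -/
abbrev Heisenberg (hA : ∀ a : A, a ^ p = 1) : Type :=
  (A × A) ⋊[shear hA] Multiplicative (ZMod p)

end Shear

namespace Heisenberg

open SemidirectProduct

section Basic

variable {p : ℕ} [NeZero p] {A : Type} [CommGroup A] (hA : ∀ a : A, a ^ p = 1)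

def ofCenter : A →* Heisenberg hA := inl.comp (MonoidHom.inl A A)

def snd : Heisenberg hA →* A where
  toFun w := w.left.2
  map_one' := rfl
  map_mul' _ _ := rfl

def mapAut : MulAut A →* MulAut (Heisenberg hA) where
  toFun e := congr (MulEquiv.prodCongr e e) (MulEquiv.refl _) fun _ =>
    MulEquiv.ext fun x => Prod.ext (show e (x.1 * x.2 ^ _) = e x.1 * e x.2 ^ _ by simp) rfl
  map_one' := rfl
  map_mul' _ _ := rfl

@[simp] theorem mapAut_apply (e : MulAut A) (w : Heisenberg hA) :
    mapAut hA e w = ⟨(e w.left.1, e w.left.2), w.right⟩ := rfl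

variable {hA}

theorem ofCenter_injective : Function.Injective (ofCenter hA) :=
  inl_injective.comp (Prod.mk_left_injective 1)

theorem eq_ofCenter {w : Heisenberg hA} (hb : snd hA w = 1) (ht : w.right = 1) :
    w = ofCenter hA w.left.1 :=
  SemidirectProduct.ext (Prod.ext rfl hb) ht

theorem isPGroup : IsPGroup p (Heisenberg hA) := by
  refine isPGroup_iff_pow_pow_eq_one.mpr fun w => ⟨2, ?_⟩
  have ht : (w ^ p).right = 1 := by
    rw [← rightHom_eq_right, map_pow, rightHom_eq_right, ← toAdd_eq_zero, toAdd_pow,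
      nsmul_eq_mul, ZMod.natCast_self, zero_mul]
  rw [pow_two, pow_mul, ← inl_left_mul_inr_right (w ^ p), ht, map_one, mul_one, ← map_pow,
    Prod.pow_def, hA, hA, Prod.mk_one_one, map_one]

end Basic

section Prime

open scoped commutatorElement

variable {p : ℕ} [Fact p.Prime] {A : Type} [CommGroup A] {hA : ∀ a : A, a ^ p = 1}

theorem ofCenter_eq_commutator (a : A) :
    ofCenter hA a = ⁅(inr (Multiplicative.ofAdd (1 : ZMod p)) : Heisenberg hA), inl (1, a)⁆ := by
  ext <;> simp [ofCenter, commutatorElement_def, ZMod.val_one]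

theorem ofCenter_mem_frattini [Finite A] (a : A) : ofCenter hA a ∈ frattini (Heisenberg hA) := by
  have := (isPGroup (hA := hA)).isNilpotent
  rw [ofCenter_eq_commutator]
  exact commutator_le_frattini
    (Subgroup.commutator_mem_commutator (Subgroup.mem_top _) (Subgroup.mem_top _))

end Prime

section SemidirectProduct

variable {p : ℕ} [NeZero p] {A Q : Type} [CommGroup A] [Group Q] (hA : ∀ a : A, a ^ p = 1)
  (ψ : Q →* MulAut A)

def toSemidirectProduct : Heisenberg hA ⋊[(mapAut hA).comp ψ] Q →* A ⋊[ψ] Q :=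
  map (snd hA) (MonoidHom.id Q) fun _ => rfl

def toProd : Heisenberg hA ⋊[(mapAut hA).comp ψ] Q →* Multiplicative (ZMod p) × Q :=
  (lift rightHom 1 fun _ => by ext; simp).prod rightHom

variable {hA ψ}

theorem eq_inl_ofCenter {x : Heisenberg hA ⋊[(mapAut hA).comp ψ] Q}
    (hx : x ∈ (toProd hA ψ).ker ⊓ (toSemidirectProduct hA ψ).ker) :
    x = inl (ofCenter hA x.left.left.1) := by
  obtain ⟨h₁, h₂⟩ := hx
  have hb : snd hA x.left = 1 := congrArg left h₂
  have ht : x.left.right * 1 = 1 := congrArg Prod.fst h₁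
  have hr : x.right = 1 := congrArg Prod.snd h₁
  exact SemidirectProduct.ext (eq_ofCenter hb ((mul_one _).symm.trans ht)) hr

end SemidirectProduct

section Diagonal

variable {p : ℕ} [NeZero p] {A G Q : Type} [CommGroup A] [Group G] [Group Q]
  {hA : ∀ a : A, a ^ p = 1} {ι : A →* G} {θ : G →* Q} {ψ : Q →* MulAut A}

variable (hA ψ) in
/-- Modulo the range of `diagonal`, `ι a ∈ G` becomes identified with the central element
`ofCenter a` of the Heisenberg group. -/
def diagonal (hθι : ∀ a, θ (ι a) = 1) :
    A →* Heisenberg hA ⋊[(mapAut hA).comp (ψ.comp θ)] G where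
  toFun a := ⟨ofCenter hA a⁻¹, ι a⟩
  map_one' := by ext <;> simp
  map_mul' a b := by ext <;> simp [hθι, ofCenter, mul_comm]

theorem inr_eq_inl_mul_diagonal (hθι : ∀ a, θ (ι a) = 1) (a : A) :
    inr (ι a) = inl (ofCenter hA a) * diagonal hA ψ hθι a := by
  ext <;> simp [diagonal, ofCenter]

theorem inr_conj_diagonal (hθι : ∀ a, θ (ι a) = 1)
    (hψ : ∀ g a, ι (ψ (θ g) a) = g * ι a * g⁻¹) (g : G) (a : A) :
    inr g * diagonal hA ψ hθι a * (inr g)⁻¹ = diagonal hA ψ hθι (ψ (θ g) a) := by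
  ext <;> simp [diagonal, ofCenter, hψ]

theorem inl_commute_diagonal (hθι : ∀ a, θ (ι a) = 1) (w : Heisenberg hA) (a : A) :
    inl w * diagonal hA ψ hθι a = diagonal hA ψ hθι a * inl w := by
  ext <;> simp [diagonal, ofCenter, hθι, mul_comm]

theorem diagonal_range_normal (hθι : ∀ a, θ (ι a) = 1)
    (hψ : ∀ g a, ι (ψ (θ g) a) = g * ι a * g⁻¹) : (diagonal hA ψ hθι).range.Normal := by
  refine ⟨?_⟩
  rintro _ ⟨a, rfl⟩ x
  obtain ⟨w, g, rfl⟩ : ∃ w g, x = inl w * inr g := ⟨_, _, (inl_left_mul_inr_right x).symm⟩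
  refine ⟨ψ (θ g) a, ?_⟩
  calc _ = inl w * diagonal hA ψ hθι (ψ (θ g) a) * (inl w)⁻¹ := by
        rw [inl_commute_diagonal, mul_inv_cancel_right]
    _ = inl w * (inr g * diagonal hA ψ hθι a * (inr g)⁻¹) * (inl w)⁻¹ := by
        rw [inr_conj_diagonal _ hψ]
    _ = _ := by group

theorem eq_inl_ofCenter_mul_diagonal (hθι : ∀ a, θ (ι a) = 1)
    {x : Heisenberg hA ⋊[(mapAut hA).comp (ψ.comp θ)] G} (hb : snd hA x.left = 1)
    (ht : x.left.right = 1) {a : A} (ha : ι a = x.right) :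
    x = inl (ofCenter hA (x.left.left.1 * a)) * diagonal hA ψ hθι a := by
  rw [map_mul, map_mul, mul_assoc, ← inr_eq_inl_mul_diagonal, ha, ← eq_ofCenter hb ht,
    inl_left_mul_inr_right]

theorem mk_inl_injective (hι : Function.Injective ι) (hθι : ∀ a, θ (ι a) = 1)
    [(diagonal hA ψ hθι).range.Normal] :
    Function.Injective ((QuotientGroup.mk' (diagonal hA ψ hθι).range).comp
      (inl (φ := (mapAut hA).comp (ψ.comp θ)))) := by
  refine (injective_iff_map_eq_one _).mpr fun w hw => ?_
  obtain ⟨a, ha⟩ := (QuotientGroup.eq_one_iff _).mp hw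
  rw [hι ((congrArg right ha).trans (map_one ι).symm), map_one] at ha
  exact inl_injective ha.symm

end Diagonal

end Heisenberg

theorem NpSaturated.heisenberg_semidirectProduct_mem {p : ℕ} [Fact p.Prime] {F : GroupClass}
    (hF : IsFormation F) (hsat : NpSaturated p F) (hCp : F (Multiplicative (ZMod p)))
    {A Q : Type} [CommGroup A] [Finite A] [Group Q] [Finite Q] (hA : ∀ a : A, a ^ p = 1)
    (ψ : Q →* MulAut A) (hAQ : F (A ⋊[ψ] Q)) :
    F (Heisenberg hA ⋊[(Heisenberg.mapAut hA).comp ψ] Q) := by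
  have : (SemidirectProduct.inl (φ := (Heisenberg.mapAut hA).comp ψ)).range.Normal := by
    rw [SemidirectProduct.range_inl_eq_ker_rightHom]
    infer_instance
  have hQ : F Q := hF.of_surjective SemidirectProduct.rightHom_surjective hAQ
  refine hsat.of_inf_ker_le_frattini hF Heisenberg.isPGroup SemidirectProduct.inl_injective
    (f₁ := Heisenberg.toProd hA ψ) (f₂ := Heisenberg.toSemidirectProduct hA ψ) ?_ ?_
    (hF.prod hCp hQ) hAQ fun x hx => ?_
  · rintro ⟨c, q⟩
    exact ⟨⟨SemidirectProduct.inr c, q⟩, by simp [Heisenberg.toProd]⟩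
  · rintro ⟨a, q⟩
    exact ⟨⟨SemidirectProduct.inl (1, a), q⟩, rfl⟩
  · rw [Heisenberg.eq_inl_ofCenter hx]
    exact Subgroup.mem_map_of_mem _ (Heisenberg.ofCenter_mem_frattini _)

open SemidirectProduct Heisenberg in
theorem NpSaturated.quotient_diagonal_mem {p : ℕ} [Fact p.Prime] {F : GroupClass}
    (hF : IsFormation F) (hsat : NpSaturated p F) (hCp : F (Multiplicative (ZMod p)))
    {A G Q : Type} [CommGroup A] [Finite A] [Group G] [Finite G] [Group Q] [Finite Q]
    (hA : ∀ a : A, a ^ p = 1) {ι : A →* G} [ι.range.Normal] {θ : G →* Q} {ψ : Q →* MulAut A}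
    (hι : Function.Injective ι) (hθι : ∀ a, θ (ι a) = 1)
    [(diagonal hA ψ hθι).range.Normal] (hθ : Function.Surjective θ) (hGA : F (G ⧸ ι.range))
    (hAQ : F (A ⋊[ψ] Q)) :
    F ((Heisenberg hA ⋊[(mapAut hA).comp (ψ.comp θ)] G) ⧸ (diagonal hA ψ hθι).range) := by
  set D := (diagonal hA ψ hθι).range
  let g₁ := (MonoidHom.prodMap (MonoidHom.id _) (QuotientGroup.mk' ι.range)).comp
    (toProd hA (ψ.comp θ))
  let g₂ := (toSemidirectProduct hA ψ).comp
    (map (φ₁ := (mapAut hA).comp (ψ.comp θ)) (MonoidHom.id _) θ fun _ => rfl)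
  have hD₁ : D ≤ g₁.ker := by
    rintro _ ⟨a, rfl⟩
    exact Prod.ext (by simp [g₁, toProd, diagonal, ofCenter])
      ((QuotientGroup.eq_one_iff _).mpr ⟨a, rfl⟩)
  have hD₂ : D ≤ g₂.ker := by
    rintro _ ⟨a, rfl⟩
    exact SemidirectProduct.ext rfl (hθι a)
  have : ((QuotientGroup.mk' D).comp (inl (φ := (mapAut hA).comp (ψ.comp θ)))).range.Normal := by
    rw [MonoidHom.range_comp, range_inl_eq_ker_rightHom]
    exact Subgroup.Normal.map inferInstance _ (QuotientGroup.mk'_surjective D)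
  refine hsat.of_inf_ker_le_frattini hF isPGroup (mk_inl_injective hι hθι)
    (f₁ := QuotientGroup.lift D g₁ hD₁) (f₂ := QuotientGroup.lift D g₂ hD₂) ?_ ?_
    (hF.prod hCp hGA) hAQ ?_
  · refine QuotientGroup.lift_surjective_of_surjective _ _ (fun ⟨c, q⟩ => ?_) _
    obtain ⟨g, rfl⟩ := QuotientGroup.mk'_surjective _ q
    exact ⟨⟨inr c, g⟩, Prod.ext (mul_one c) rfl⟩
  · refine QuotientGroup.lift_surjective_of_surjective _ _ (fun ⟨a, q⟩ => ?_) _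
    obtain ⟨g, rfl⟩ := hθ q
    exact ⟨⟨inl (1, a), g⟩, rfl⟩
  · rintro y ⟨h₁, h₂⟩
    obtain ⟨x, rfl⟩ := QuotientGroup.mk'_surjective D y
    have ht : x.left.right * 1 = 1 := congrArg Prod.fst h₁
    have hr : (x.right : G ⧸ ι.range) = 1 := congrArg Prod.snd h₁
    obtain ⟨a, ha⟩ := (QuotientGroup.eq_one_iff _).mp hr
    have hx := eq_inl_ofCenter_mul_diagonal hθι (congrArg left h₂) ((mul_one _).symm.trans ht) ha
    have hda : QuotientGroup.mk' D (diagonal hA ψ hθι a) = 1 :=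
      (QuotientGroup.eq_one_iff _).mpr ⟨a, rfl⟩
    refine ⟨ofCenter hA (x.left.left.1 * a), ofCenter_mem_frattini _, ?_⟩
    conv_rhs => rw [hx, map_mul, hda, mul_one]
    rfl

open SemidirectProduct Heisenberg in
theorem NpSaturated.mem_of_semidirectProduct_mem {p : ℕ} [Fact p.Prime] {F : GroupClass}
    (hF : IsFormation F) (hsat : NpSaturated p F) (hCp : F (Multiplicative (ZMod p)))
    {A G Q : Type} [CommGroup A] [Finite A] [Group G] [Finite G] [Group Q] [Finite Q]
    (hA : ∀ a : A, a ^ p = 1) {ι : A →* G} [ι.range.Normal] {θ : G →* Q} {ψ : Q →* MulAut A}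
    (hι : Function.Injective ι) (hθι : ∀ a, θ (ι a) = 1)
    (hψ : ∀ g a, ι (ψ (θ g) a) = g * ι a * g⁻¹) (hθ : Function.Surjective θ)
    (hGA : F (G ⧸ ι.range)) (hAQ : F (A ⋊[ψ] Q)) : F G := by
  have := diagonal_range_normal (hA := hA) hθι hψ
  let π := map (φ₁ := (mapAut hA).comp (ψ.comp θ)) (φ₂ := (mapAut hA).comp ψ)
    (MonoidHom.id _) θ fun _ => rfl
  have hπ : Function.Surjective π := fun ⟨w, q⟩ => by
    obtain ⟨g, rfl⟩ := hθ q
    exact ⟨⟨w, g⟩, rfl⟩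
  have hπD : π.ker ⊓ (QuotientGroup.mk' (diagonal hA ψ hθι).range).ker = ⊥ := by
    rw [QuotientGroup.ker_mk', Subgroup.eq_bot_iff_forall]
    rintro _ ⟨hπx, a, rfl⟩
    have ha : a⁻¹ = 1 := ofCenter_injective ((congrArg left hπx).trans (map_one _).symm)
    rw [inv_eq_one.mp ha, map_one]
  exact hF.of_surjective rightHom_surjective <| hF.of_subdirect hπ
    (QuotientGroup.mk'_surjective _) hπD (hsat.heisenberg_semidirectProduct_mem hF hCp hA ψ hAQ)
    (hsat.quotient_diagonal_mem hF hCp hA hι hθι hθ hGA hAQ)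

theorem statement_3_general (p : ℕ) (hp : p.Prime) (F : GroupClass) (hF : IsFormation F)
    (hsat : NpSaturated p F)
    (hNp : ∀ (P : Type) [Group P] [Finite P], IsPGroup p P → F P)
    (G : Type) [Group G] [Finite G] (N : Subgroup G) [N.Normal]
    (hab : ∀ a b : N, a * b = b * a)
    (hord : ∀ x : N, x ≠ 1 → orderOf x = p)
    (hquot : F (G ⧸ N))
    (φ : G ⧸ Subgroup.centralizer (N : Set G) →* MulAut ↥N)
    (hφ : ∀ (g : G) (n : N), (↑(φ (QuotientGroup.mk g) n) : G) = g * ↑n * g⁻¹)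
    (hsd : F (↥N ⋊[φ] (G ⧸ Subgroup.centralizer (N : Set G)))) :
    F G := by
  have : Fact p.Prime := ⟨hp⟩
  let _ : CommGroup N := { (inferInstance : Group N) with mul_comm := hab }
  have hexp (n : N) : n ^ p = 1 := by
    rcases eq_or_ne n 1 with rfl | hn
    · exact one_pow p
    · exact hord n hn ▸ pow_orderOf_eq_one n
  have hNC (n : N) : QuotientGroup.mk' (Subgroup.centralizer (N : Set G)) (n : G) = 1 :=
    (QuotientGroup.eq_one_iff _).mpr <| Subgroup.mem_centralizer_iff.mpr fun m hm =>
      congrArg Subtype.val (hab ⟨m, hm⟩ n)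
  have : N.subtype.range.Normal := by rw [N.range_subtype]; infer_instance
  exact hsat.mem_of_semidirectProduct_mem hF (hNp _ ZModModule.isPGroup_multiplicative) hexp
    Subtype.val_injective hNC hφ (QuotientGroup.mk'_surjective _)
    (hF.iso_closed _ _ ⟨QuotientGroup.quotientMulEquivOfEq N.range_subtype.symm⟩ hquot) hsd

/-- Let `𝔉` be an `ℕ_p`-saturated formation containing all finite `p`-groups and
`N` an elementary abelian normal `p`-subgroup of `G` with `G/N ∈ 𝔉` and
`N ⋊ (G/C_G(N)) ∈ 𝔉`.  Then `G ∈ 𝔉`. -/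
theorem statement_3 (p : ℕ) (hp : p.Prime) (F : GroupClass) (hF : IsFormation F)
    (hsat : NpSaturated p F)
    (hNp : ∀ (P : Type) [Group P] [Finite P], IsPGroup p P → F P)
    (G : Type) [Group G] [Finite G] (N : Subgroup G) [N.Normal]
    (hpgrp : IsPGroup p N)
    (hab : ∀ a b : N, a * b = b * a)
    (hord : ∀ x : N, x ≠ 1 → orderOf x = p)
    (hquot : F (G ⧸ N))
    (φ : G ⧸ Subgroup.centralizer (N : Set G) →* MulAut ↥N)
    (hφ : ∀ (g : G) (n : N), (↑(φ (QuotientGroup.mk g) n) : G) = g * ↑n * g⁻¹)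
    (hsd : F (↥N ⋊[φ] (G ⧸ Subgroup.centralizer (N : Set G)))) :
    F G :=
  statement_3_general p hp F hF hsat hNp G N hab hord hquot φ hφ hsd
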